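/- Fix q ∈ ℂ with 0 < |q| < 1 and set ζ := q/conj(q). On ℓ²(ℤ⁴) with standard orthonormal basis (e_{i,j,k,l}), let 𝔅 be the unitary determined by 𝔅 e_{i,j,k,l} = ζ^{−jl} e_{k,l,i,j}. Define linear operators on the dense subspace of finitely supported vectors: N₀ e_{i,j,k,l} = q^i e_{i,j+1,k,l}, M₀ e_{i,j,k,l} = ζ^{−j} q^k e_{i,j,k,l+1}, N₁ e_{i,j,k,l} = q^i e_{i−1,j+1,k,l}, and M₁ e_{i,j,k,l} = ζ^{−j} q^k e_{i,j,k−1,l+1}. Then for every finitely supported vector ξ: 𝔅(N₀(𝔅⁻¹ξ)) = M₀ξ and 𝔅(N₁(𝔅⁻¹ξ)) = M₁ξ; that is, 𝔅(n⊗1)𝔅* = P⊗n and 𝔅(vn⊗1)𝔅* = P⊗vn. -/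

import Mathlib

noncomputable section

/-- The Hilbert space ℓ²(ℤ⁴). -/
abbrev H : Type := lp (fun _ : ℤ × ℤ × ℤ × ℤ => ℂ) 2

/-- The dense subspace of finitely supported vectors in ℓ²(ℤ⁴). -/
abbrev F : Type := (ℤ × ℤ × ℤ × ℤ) →₀ ℂ

/-- The standard orthonormal basis vector of ℓ²(ℤ⁴). -/
noncomputable def e (i j k l : ℤ) : H := lp.single 2 (i, j, k, l) 1

/-- The standard basis vector of the finitely supported subspace. -/
noncomputable def δ (i j k l : ℤ) : F := Finsupp.single (i, j, k, l) 1

/-!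
Both sides are linear in `ξ`, and substituting `ξ = 𝔅 η` reduces the claim to the intertwining
relations `𝔅 N₀ = M₀ 𝔅` and `𝔅 N₁ = M₁ 𝔅`, which need only be checked on basis vectors. On
`δ i j k l` both sides of either relation are multiples of the same basis vector, and the scalars
agree because `ζ ^ (-(j + 1) * l) = ζ ^ (-j * l) * ζ ^ (-l)`; this needs `ζ ≠ 0`, i.e. `q ≠ 0`.
-/

theorem linearMap_ext_δ {M : Type*} [AddCommMonoid M] [Module ℂ M] {φ ψ : F →ₗ[ℂ] M}
    (h : ∀ i j k l, φ (δ i j k l) = ψ (δ i j k l)) : φ = ψ :=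
  Finsupp.lhom_ext' fun ⟨i, j, k, l⟩ => LinearMap.ext_ring (h i j k l)

/-- `s = id` gives `n ⊗ 1` and `P ⊗ n`, `s = (· - 1)` gives `vn ⊗ 1` and `P ⊗ vn`. -/
theorem braiding_comp_eq_comp_braiding {q ζ : ℂ} (hζ : ζ ≠ 0) (s : ℤ → ℤ) {B : H →ₗ[ℂ] H}
    (hB : ∀ i j k l : ℤ, B (e i j k l) = ζ ^ (-(j * l)) • e k l i j) {Bf : F →ₗ[ℂ] F}
    (hBf : ∀ i j k l : ℤ, Bf (δ i j k l) = ζ ^ (-(j * l)) • δ k l i j) {N M : F →ₗ[ℂ] H}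
    (hN : ∀ i j k l : ℤ, N (δ i j k l) = q ^ i • e (s i) (j + 1) k l)
    (hM : ∀ i j k l : ℤ, M (δ i j k l) = (ζ ^ (-j) * q ^ k) • e i j (s k) (l + 1)) :
    B ∘ₗ N = M ∘ₗ Bf := by
  refine linearMap_ext_δ fun i j k l => ?_
  have hscalar : ζ ^ (-((j + 1) * l)) = ζ ^ (-(j * l)) * ζ ^ (-l) := by
    rw [← zpow_add₀ hζ]
    ring_nf
  simp only [LinearMap.comp_apply, hN, hBf, map_smul, hB, hM, smul_smul, hscalar]
  ring_nf

theorem braiding_conjugates_n_and_vn_general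
    (q : ℂ) (hq0 : 0 < ‖q‖)
    (ζ : ℂ) (hζ : ζ = q / (starRingEnd ℂ) q)
    -- the braiding unitary 𝔅 on ℓ²(ℤ⁴)
    (B : H ≃ₗᵢ[ℂ] H)
    (hB : ∀ i j k l : ℤ, B (e i j k l) = ζ ^ (-(j * l)) • e k l i j)
    -- its restriction to finitely supported vectors (so Bf.symm is 𝔅⁻¹)
    (Bf : F ≃ₗ[ℂ] F)
    (hBf : ∀ i j k l : ℤ, Bf (δ i j k l) = ζ ^ (-(j * l)) • δ k l i j)
    -- the operators n⊗1, vn⊗1, P⊗n, P⊗vn on finitely supported vectors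
    (N0 N1 M0 M1 : F →ₗ[ℂ] H)
    (hN0 : ∀ i j k l : ℤ, N0 (δ i j k l) = q ^ i • e i (j + 1) k l)
    (hM0 : ∀ i j k l : ℤ, M0 (δ i j k l) = (ζ ^ (-j) * q ^ k) • e i j k (l + 1))
    (hN1 : ∀ i j k l : ℤ, N1 (δ i j k l) = q ^ i • e (i - 1) (j + 1) k l)
    (hM1 : ∀ i j k l : ℤ, M1 (δ i j k l) = (ζ ^ (-j) * q ^ k) • e i j (k - 1) (l + 1)) :
    ∀ ξ : F, B (N0 (Bf.symm ξ)) = M0 ξ ∧ B (N1 (Bf.symm ξ)) = M1 ξ := by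
  have hq : q ≠ 0 := norm_pos_iff.mp hq0
  have hζ0 : ζ ≠ 0 := hζ ▸ div_ne_zero hq (by simpa using hq)
  have h0 := braiding_comp_eq_comp_braiding (B := B.toLinearEquiv.toLinearMap)
    (Bf := Bf.toLinearMap) hζ0 id hB hBf hN0 hM0
  have h1 := braiding_comp_eq_comp_braiding (B := B.toLinearEquiv.toLinearMap)
    (Bf := Bf.toLinearMap) hζ0 (· - 1) hB hBf hN1 hM1
  intro ξ
  constructor
  · simpa using LinearMap.congr_fun h0 (Bf.symm ξ)
  · simpa using LinearMap.congr_fun h1 (Bf.symm ξ)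

theorem braiding_conjugates_n_and_vn
    (q : ℂ) (hq0 : 0 < ‖q‖) (hq1 : ‖q‖ < 1)
    (ζ : ℂ) (hζ : ζ = q / (starRingEnd ℂ) q)
    -- the braiding unitary 𝔅 on ℓ²(ℤ⁴)
    (B : H ≃ₗᵢ[ℂ] H)
    (hB : ∀ i j k l : ℤ, B (e i j k l) = ζ ^ (-(j * l)) • e k l i j)
    -- its restriction to finitely supported vectors (so Bf.symm is 𝔅⁻¹)
    (Bf : F ≃ₗ[ℂ] F)
    (hBf : ∀ i j k l : ℤ, Bf (δ i j k l) = ζ ^ (-(j * l)) • δ k l i j)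
    -- the operators n⊗1, vn⊗1, P⊗n, P⊗vn on finitely supported vectors
    (N0 N1 M0 M1 : F →ₗ[ℂ] H)
    (hN0 : ∀ i j k l : ℤ, N0 (δ i j k l) = q ^ i • e i (j + 1) k l)
    (hM0 : ∀ i j k l : ℤ, M0 (δ i j k l) = (ζ ^ (-j) * q ^ k) • e i j k (l + 1))
    (hN1 : ∀ i j k l : ℤ, N1 (δ i j k l) = q ^ i • e (i - 1) (j + 1) k l)
    (hM1 : ∀ i j k l : ℤ, M1 (δ i j k l) = (ζ ^ (-j) * q ^ k) • e i j (k - 1) (l + 1)) :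
    ∀ ξ : F, B (N0 (Bf.symm ξ)) = M0 ξ ∧ B (N1 (Bf.symm ξ)) = M1 ξ :=
  braiding_conjugates_n_and_vn_general q hq0 ζ hζ B hB Bf hBf N0 N1 M0 M1 hN0 hM0 hN1 hM1
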